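/- Let 1 ≤ q < ∞ and ε' > 0. There exists a constant C(ε', q) > 0 such that for every N-dimensional subspace X_N of L_q(Ω) consisting of continuous functions which satisfies ε_k(X_N^q, L_∞) ≤ B·(N/k)^{1/q} for all 1 ≤ k ≤ N (with B ≥ 1), one has H_ε(X_N^q, L_∞) ≤ C(ε', q)·N·(B/ε)^q for every ε ≥ ε'. -/

import Mathlib

open MeasureTheory

noncomputable def supDist {Ω E : Type*} [NormedAddCommGroup E] (f g : Ω → E) : ℝ :=
  ⨆ x, ‖f x - g x‖

/-- Covering number: the minimal number of balls of radius `ε` (w.r.t. the distance `dst`)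
with centers in `A` needed to cover `A`. -/
noncomputable def coveringNum {α : Type*} (dst : α → α → ℝ) (ε : ℝ) (A : Set α) : ℕ :=
  sInf {n : ℕ | ∃ T : Finset α, ↑T ⊆ A ∧ T.card = n ∧ ∀ f ∈ A, ∃ g ∈ T, dst f g ≤ ε}

/-- The ε-entropy `H_ε(A) = log₂ N_ε(A)`. -/
noncomputable def metricEntropy {α : Type*} (dst : α → α → ℝ) (ε : ℝ) (A : Set α) : ℝ :=
  Real.logb 2 (coveringNum dst ε A)

/-- The entropy numbers `ε_k(A) = inf {ε > 0 : H_ε(A) ≤ k}`. -/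
noncomputable def entropyNum {α : Type*} (dst : α → α → ℝ) (k : ℕ) (A : Set α) : ℝ :=
  sInf {ε : ℝ | 0 < ε ∧ metricEntropy dst ε A ≤ k}
/-- The `L_q` norm `(∫_Ω ‖f‖^q dμ)^{1/q}`. -/
noncomputable def LqNorm {Ω : Type*} [MeasurableSpace Ω] {E : Type*} [NormedAddCommGroup E]
    (μ : MeasureTheory.Measure Ω) (q : ℝ) (f : Ω → E) : ℝ :=
  (∫ x, ‖f x‖ ^ q ∂μ) ^ (1 / q)
/-- `X_N^q`, the `L_q` unit ball of the subspace `V`. -/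
noncomputable def unitBallLq {Ω : Type*} [MeasurableSpace Ω] (μ : MeasureTheory.Measure Ω)
    (q : ℝ) (V : Submodule ℝ (Ω → ℝ)) : Set (Ω → ℝ) :=
  {f | f ∈ V ∧ LqNorm μ q f ≤ 1}

/-!
If the `L_q`-unit ball `A` has no finite `ε`-net, then `H_ε(A) = log₂ 0 = 0`. Otherwise `A` is
bounded in sup norm, so `‖f‖_∞ ≤ R ‖f‖_q` on `X_N`, hence `‖f‖_∞ ≤ R^q ‖f‖_1 ≤ R^q ‖f‖_2`; for an
`L_2`-orthonormal system `uᵢ` in `X_N` this gives `∑ uᵢ(x)² ≤ R^{2q}` pointwise, and integrating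
bounds the number of `uᵢ`. So `X_N` is finite-dimensional and `N` is its dimension (`finrank` would
be `0` otherwise).

In `C(Ω, ℝ)`, with `x = B/ε`, three regimes remain:
* `ε ≤ B`: the hypothesis for `k = N` covers `A` by `2^N` balls of radius `2B`; inside the
  `N`-dimensional space each of them is covered by `(1 + 8x)^N` balls of radius `ε/2` by comparing
  volumes, so `H_ε ≤ N (1 + log₂ (1 + 8x)) ≤ 17 N x^q`;
* `1 ≤ 2^q N x^q` and `ε > B`: the hypothesis for `k = ⌊N x^q⌋ + 1 ≤ N` gives `H_ε ≤ k`;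
* `2^q N x^q < 1`: the hypothesis for `k = 1` covers `A` by two balls of radius `ε/2`, and since
  `A` is symmetric and contains `0` it lies in the ball of radius `ε` around `0`, so `H_ε = 0`.
-/

open Metric Bornology

section CoveringNum

variable {α : Type*} {dst : α → α → ℝ} {ε : ℝ} {A : Set α}

lemma coveringNum_le_card (T : Finset α) (hTA : ↑T ⊆ A) (hT : ∀ f ∈ A, ∃ g ∈ T, dst f g ≤ ε) :
    coveringNum dst ε A ≤ T.card :=
  Nat.sInf_le ⟨T, hTA, rfl, hT⟩

lemma exists_card_eq_coveringNum (h : ∃ T : Finset α, ↑T ⊆ A ∧ ∀ f ∈ A, ∃ g ∈ T, dst f g ≤ ε) :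
    ∃ T : Finset α, ↑T ⊆ A ∧ T.card = coveringNum dst ε A ∧ ∀ f ∈ A, ∃ g ∈ T, dst f g ≤ ε := by
  obtain ⟨T, hTA, hT⟩ := h
  exact Nat.sInf_mem
    (s := {n | ∃ T : Finset α, ↑T ⊆ A ∧ T.card = n ∧ ∀ f ∈ A, ∃ g ∈ T, dst f g ≤ ε})
    ⟨T.card, T, hTA, rfl, hT⟩

lemma metricEntropy_le_logb {y : ℝ} (hy : 1 ≤ y) (h : (coveringNum dst ε A : ℝ) ≤ y) :
    metricEntropy dst ε A ≤ Real.logb 2 y := by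
  rcases Nat.eq_zero_or_pos (coveringNum dst ε A) with h0 | hpos
  · simpa [metricEntropy, h0] using Real.logb_nonneg one_lt_two hy
  · exact Real.logb_le_logb_of_le one_lt_two (by exact_mod_cast hpos) h

lemma metricEntropy_le_of_card_le_two_pow (T : Finset α) (hTA : ↑T ⊆ A)
    (hT : ∀ f ∈ A, ∃ g ∈ T, dst f g ≤ ε) {k : ℕ} (hk : T.card ≤ 2 ^ k) :
    metricEntropy dst ε A ≤ k := by
  have h := metricEntropy_le_logb (one_le_pow₀ one_le_two)
    (by exact_mod_cast (coveringNum_le_card T hTA hT).trans hk : (coveringNum dst ε A : ℝ) ≤ 2 ^ k)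
  rwa [Real.logb_pow, Real.logb_self_eq_one one_lt_two, mul_one] at h

lemma coveringNum_image {β : Type*} {dst' : β → β → ℝ} {φ : β → α} (hφ : φ.Injective)
    (hdst : ∀ a b, dst (φ a) (φ b) = dst' a b) (ε : ℝ) (A : Set β) :
    coveringNum dst ε (φ '' A) = coveringNum dst' ε A := by
  classical
  unfold coveringNum
  congr 1
  ext n
  constructor
  · rintro ⟨T, hTA, rfl, hT⟩
    obtain ⟨S, hSA, rfl⟩ := Finset.subset_set_image_iff.mp hTA
    refine ⟨S, hSA, (Finset.card_image_of_injective S hφ).symm, fun a ha => ?_⟩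
    obtain ⟨_, hg, hfg⟩ := hT (φ a) ⟨a, ha, rfl⟩
    obtain ⟨b, hb, rfl⟩ := Finset.mem_image.mp hg
    exact ⟨b, hb, hdst a b ▸ hfg⟩
  · rintro ⟨T, hTA, rfl, hT⟩
    refine ⟨T.image φ, ?_, Finset.card_image_of_injective T hφ, ?_⟩
    · simpa using Set.image_mono hTA
    · rintro _ ⟨a, ha, rfl⟩
      obtain ⟨b, hb, hab⟩ := hT a ha
      exact ⟨φ b, Finset.mem_image_of_mem φ hb, (hdst a b).symm ▸ hab⟩

lemma metricEntropy_image {β : Type*} {dst' : β → β → ℝ} {φ : β → α} (hφ : φ.Injective)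
    (hdst : ∀ a b, dst (φ a) (φ b) = dst' a b) (ε : ℝ) (A : Set β) :
    metricEntropy dst ε (φ '' A) = metricEntropy dst' ε A := by
  rw [metricEntropy, metricEntropy, coveringNum_image hφ hdst]

lemma entropyNum_image {β : Type*} {dst' : β → β → ℝ} {φ : β → α} (hφ : φ.Injective)
    (hdst : ∀ a b, dst (φ a) (φ b) = dst' a b) (k : ℕ) (A : Set β) :
    entropyNum dst k (φ '' A) = entropyNum dst' k A := by
  simp only [entropyNum, metricEntropy_image hφ hdst]

end CoveringNum

section PseudoMetric

variable {X : Type*} [PseudoMetricSpace X] {A : Set X} {r : ℝ}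

lemma metricEntropy_nonpos_of_subset_closedBall {x : X} (hx : x ∈ A) (hA : A ⊆ closedBall x r) :
    metricEntropy dist r A ≤ 0 := by
  have h := coveringNum_le_card {x} (by simpa using hx) fun a ha =>
    ⟨x, Finset.mem_singleton_self x, hA ha⟩
  simpa using metricEntropy_le_logb le_rfl (by exact_mod_cast h)

lemma coveringNum_two_mul_le_card (C : Finset X) (hC : ∀ a ∈ A, ∃ c ∈ C, dist a c ≤ r) :
    coveringNum dist (2 * r) A ≤ C.card := by
  classical
  let near : X → Prop := fun c => ∃ a ∈ A, dist a c ≤ r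
  let pick : X → X := fun c => if h : near c then h.choose else c
  have hpick : ∀ c, near c → pick c ∈ A ∧ dist (pick c) c ≤ r := fun c h => by
    simpa only [pick, dif_pos h] using h.choose_spec
  refine le_trans (coveringNum_le_card ((C.filter near).image pick) ?_ fun a ha => ?_)
    (Finset.card_image_le.trans (Finset.card_filter_le _ _))
  · intro b hb
    obtain ⟨c, hc, rfl⟩ := Finset.mem_image.mp hb
    exact (hpick c (Finset.mem_filter.mp hc).2).1
  · obtain ⟨c, hc, hac⟩ := hC a ha
    have hnear : near c := ⟨a, ha, hac⟩
    refine ⟨pick c, Finset.mem_image_of_mem _ (Finset.mem_filter.mpr ⟨hc, hnear⟩), ?_⟩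
    linarith [dist_triangle_right a (pick c) c, (hpick c hnear).2]

lemma isBounded_of_coveringNum_ne_zero (h : coveringNum dist r A ≠ 0) : IsBounded A := by
  obtain ⟨T, -, -, hT⟩ : coveringNum dist r A ∈
      {n | ∃ T : Finset X, ↑T ⊆ A ∧ T.card = n ∧ ∀ a ∈ A, ∃ t ∈ T, dist a t ≤ r} :=
    Nat.sInf_mem (Nat.nonempty_of_pos_sInf (Nat.pos_of_ne_zero h))
  refine (T.finite_toSet.isBounded.cthickening (δ := r)).subset fun a ha => ?_
  obtain ⟨t, ht, hat⟩ := hT a ha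
  exact mem_cthickening_of_dist_le a t r (T : Set X) ht hat

lemma exists_cover_of_totallyBounded (hA : TotallyBounded A) (hr : 0 < r) :
    ∃ T : Finset X, ↑T ⊆ A ∧ ∀ a ∈ A, ∃ t ∈ T, dist a t ≤ r := by
  obtain ⟨S, hSA, hSfin, hS⟩ := finite_approx_of_totallyBounded hA r hr
  refine ⟨hSfin.toFinset, by simpa using hSA, fun a ha => ?_⟩
  obtain ⟨t, ht, hat⟩ := Set.mem_iUnion₂.mp (hS ha)
  exact ⟨t, hSfin.mem_toFinset.mpr ht, (mem_ball.mp hat).le⟩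

lemma exists_cover_card_le_two_pow_of_entropyNum_lt (hne : A.Nonempty) (htb : TotallyBounded A)
    {k : ℕ} {ρ : ℝ} (h : entropyNum dist k A < ρ) :
    ∃ T : Finset X, ↑T ⊆ A ∧ T.card ≤ 2 ^ k ∧ ∀ a ∈ A, ∃ t ∈ T, dist a t ≤ ρ := by
  obtain ⟨x, hx⟩ := hne
  obtain ⟨R, hR, hAR⟩ := htb.isBounded.subset_closedBall_lt 0 x
  have hS : {ρ : ℝ | 0 < ρ ∧ metricEntropy dist ρ A ≤ k}.Nonempty :=
    ⟨R, hR, (metricEntropy_nonpos_of_subset_closedBall hx hAR).trans k.cast_nonneg⟩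
  obtain ⟨ρ', ⟨hρ'0, hH⟩, hρ'⟩ := (csInf_lt_iff ⟨0, fun _ h => h.1.le⟩ hS).mp h
  obtain ⟨T, hTA, hTcard, hT⟩ :=
    exists_card_eq_coveringNum (exists_cover_of_totallyBounded htb hρ'0)
  have hTpos : (0 : ℝ) < T.card := by
    obtain ⟨t, ht, -⟩ := hT x hx
    exact_mod_cast Finset.card_pos.mpr ⟨t, ht⟩
  rw [metricEntropy, ← hTcard, Real.logb_le_iff_le_rpow one_lt_two hTpos, Real.rpow_natCast] at hH
  refine ⟨T, hTA, by exact_mod_cast hH, fun a ha => ?_⟩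
  obtain ⟨t, ht, hat⟩ := hT a ha
  exact ⟨t, ht, hat.trans hρ'.le⟩

end PseudoMetric

section FiniteDimensional

open Module MeasureTheory

variable {F : Type*} [NormedAddCommGroup F] [NormedSpace ℝ F] [FiniteDimensional ℝ F]

/-- The balls of radius `r / 2` around the points of `P` are disjoint and lie in the ball of radius
`R + r / 2`; compare volumes. -/
lemma card_le_of_pairwise_le_dist (P : Finset F) {x : F} {R r : ℝ} (hR : 0 ≤ R) (hr : 0 < r)
    (hPR : ↑P ⊆ closedBall x R) (hP : (P : Set F).Pairwise fun p p' => r ≤ dist p p') :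
    (P.card : ℝ) ≤ (1 + 2 * R / r) ^ finrank ℝ F := by
  let _ : MeasurableSpace F := borel F
  have : BorelSpace F := ⟨rfl⟩
  set μ : Measure F := Measure.addHaar
  set n := finrank ℝ F
  have hvol : ∀ y : F, ∀ s : ℝ, 0 < s → μ (ball y s) = ENNReal.ofReal (s ^ n) * μ (ball 0 1) :=
    fun y s hs => Measure.addHaar_ball_of_pos μ y hs
  have hdisj : (P : Set F).PairwiseDisjoint fun p => ball p (r / 2) :=
    fun p hp p' hp' hne => ball_disjoint_ball (by linarith [hP hp hp' hne])
  have hsub : (⋃ p ∈ P, ball p (r / 2)) ⊆ ball x (R + r / 2) := by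
    refine Set.iUnion₂_subset fun p hp => ball_subset_ball' ?_
    linarith [mem_closedBall.mp (hPR hp)]
  have hmeas : (P.card : ENNReal) * ENNReal.ofReal ((r / 2) ^ n) * μ (ball 0 1)
      ≤ ENNReal.ofReal ((R + r / 2) ^ n) * μ (ball 0 1) := by
    calc (P.card : ENNReal) * ENNReal.ofReal ((r / 2) ^ n) * μ (ball 0 1)
        = ∑ p ∈ P, μ (ball p (r / 2)) := by
          rw [Finset.sum_congr rfl fun p _ => hvol p _ (half_pos hr), Finset.sum_const,
            nsmul_eq_mul, mul_assoc]
      _ = μ (⋃ p ∈ P, ball p (r / 2)) :=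
          (measure_biUnion_finset hdisj fun p _ => measurableSet_ball).symm
      _ ≤ μ (ball x (R + r / 2)) := measure_mono hsub
      _ = _ := hvol x _ (by positivity)
  rw [ENNReal.mul_le_mul_iff_left (measure_ball_pos μ 0 one_pos).ne' measure_ball_lt_top.ne,
    ← ENNReal.ofReal_natCast, ← ENNReal.ofReal_mul (by positivity),
    ENNReal.ofReal_le_ofReal_iff (by positivity), ← le_div_iff₀ (by positivity), ← div_pow]
    at hmeas
  rwa [show (R + r / 2) / (r / 2) = 1 + 2 * R / r by field_simp; ring] at hmeas

lemma exists_cover_closedBall_card_le (x : F) {R r : ℝ} (hR : 0 ≤ R) (hr : 0 < r) :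
    ∃ T : Finset F, (T.card : ℝ) ≤ (1 + 2 * R / r) ^ finrank ℝ F ∧
      ∀ y ∈ closedBall x R, ∃ t ∈ T, dist y t ≤ r := by
  classical
  let IsPacking : Finset F → Prop := fun P =>
    ↑P ⊆ closedBall x R ∧ (P : Set F).Pairwise fun p p' => r < dist p p'
  have hcard : ∀ P, IsPacking P → (P.card : ℝ) ≤ (1 + 2 * R / r) ^ finrank ℝ F :=
    fun P hP => card_le_of_pairwise_le_dist P hR hr hP.1 (hP.2.mono' fun _ _ h => h.le)
  have hbdd : BddAbove (Finset.card '' {P | IsPacking P}) :=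
    ⟨_, by rintro _ ⟨P, hP, rfl⟩; exact Nat.le_floor (hcard P hP)⟩
  have hne : (Finset.card '' {P | IsPacking P}).Nonempty := ⟨0, ∅, by simp [IsPacking], rfl⟩
  obtain ⟨P, hP, hPmax⟩ := Nat.sSup_mem hne hbdd
  refine ⟨P, hcard P hP, fun y hy => ?_⟩
  by_contra! hfar
  have hyP : y ∉ P := fun h => by simpa using hr.trans (hfar y h)
  have hins : IsPacking (insert y P) := by
    refine ⟨by simpa [Set.insert_subset_iff] using ⟨hy, hP.1⟩, ?_⟩
    rw [Finset.coe_insert, Set.pairwise_insert]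
    exact ⟨hP.2, fun p hp _ => ⟨hfar p hp, dist_comm y p ▸ hfar p hp⟩⟩
  have := le_csSup hbdd ⟨_, hins, rfl⟩
  rw [← hPmax, Finset.card_insert_of_notMem hyP] at this
  omega

end FiniteDimensional

lemma Submodule.finrank_comap_eq_of_le_range {R M M' : Type*} [Ring R] [AddCommGroup M]
    [Module R M] [AddCommGroup M'] [Module R M'] {f : M →ₗ[R] M'} (hf : Function.Injective f)
    {p : Submodule R M'} (hp : p ≤ LinearMap.range f) :
    Module.finrank R (p.comap f) = Module.finrank R p := by
  conv_rhs => rw [← Submodule.map_comap_eq_of_le hp]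
  exact (Submodule.equivMapOfInjective f hf _).finrank_eq

section Submodule

open Module

variable {E : Type*} [NormedAddCommGroup E] [NormedSpace ℝ E] (W : Submodule ℝ E)
  [FiniteDimensional ℝ W]

lemma Submodule.exists_cover_closedBall_card_le {g : E} (hg : g ∈ W) {R r : ℝ} (hR : 0 ≤ R)
    (hr : 0 < r) : ∃ C : Finset E, (C.card : ℝ) ≤ (1 + 2 * R / r) ^ finrank ℝ W ∧
      ∀ a ∈ W, dist a g ≤ R → ∃ c ∈ C, dist a c ≤ r := by
  obtain ⟨T, hTcard, hT⟩ := _root_.exists_cover_closedBall_card_le (⟨g, hg⟩ : W) hR hr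
  refine ⟨T.map (Function.Embedding.subtype _), by rwa [Finset.card_map], fun a ha hag => ?_⟩
  obtain ⟨t, ht, hat⟩ := hT ⟨a, ha⟩ hag
  exact ⟨t, Finset.mem_map_of_mem _ ht, hat⟩

lemma coveringNum_two_mul_le_of_cover_submodule {A : Set E} (hAW : A ⊆ W) (T₀ : Finset E)
    (hT₀W : ↑T₀ ⊆ (W : Set E)) {R r : ℝ} (hR : 0 ≤ R) (hr : 0 < r)
    (hT₀ : ∀ a ∈ A, ∃ t ∈ T₀, dist a t ≤ R) :
    (coveringNum dist (2 * r) A : ℝ) ≤ T₀.card * (1 + 2 * R / r) ^ finrank ℝ W := by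
  classical
  choose! C hCcard hC using fun t (ht : t ∈ T₀) =>
    W.exists_cover_closedBall_card_le (hT₀W ht) hR hr
  calc (coveringNum dist (2 * r) A : ℝ) ≤ (T₀.biUnion C).card := by
        refine Nat.cast_le.mpr (coveringNum_two_mul_le_card _ fun a ha => ?_)
        obtain ⟨t, ht, hat⟩ := hT₀ a ha
        obtain ⟨c, hc, hac⟩ := hC t ht a (hAW ha) hat
        exact ⟨c, Finset.mem_biUnion.mpr ⟨t, ht, hc⟩, hac⟩
    _ ≤ ∑ t ∈ T₀, ((C t).card : ℝ) := by exact_mod_cast Finset.card_biUnion_le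
    _ ≤ T₀.card * (1 + 2 * R / r) ^ finrank ℝ W := by
        simpa using Finset.sum_le_sum hCcard

lemma totallyBounded_of_subset_submodule {A : Set E} (hAW : A ⊆ W) (hA : IsBounded A) :
    TotallyBounded A := by
  obtain ⟨R, hR⟩ := hA.subset_closedBall 0
  refine ((isCompact_closedBall (0 : W) R).image continuous_subtype_val).totallyBounded.subset ?_
  intro a ha
  refine ⟨⟨a, hAW ha⟩, ?_, rfl⟩
  simpa [mem_closedBall, Subtype.dist_eq] using hR ha

end Submodule

/-- Of `a`, `-a` and `0`, two share a center of a cover with at most two points. -/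
lemma subset_closedBall_of_cover_card_le_two {E : Type*} [SeminormedAddCommGroup E]
    [NormedSpace ℝ E] {A : Set E} (hA0 : 0 ∈ A) (hAneg : ∀ a ∈ A, -a ∈ A) (T : Finset E)
    (hT2 : T.card ≤ 2) {r : ℝ} (hT : ∀ a ∈ A, ∃ t ∈ T, dist a t ≤ r) :
    A ⊆ closedBall 0 (2 * r) := by
  classical
  intro a ha
  obtain ⟨t₁, ht₁, h₁⟩ := hT a ha
  obtain ⟨t₂, ht₂, h₂⟩ := hT (-a) (hAneg a ha)
  obtain ⟨t₃, ht₃, h₃⟩ := hT 0 hA0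
  have hr : 0 ≤ r := dist_nonneg.trans h₃
  have hcoinc : t₁ = t₂ ∨ t₁ = t₃ ∨ t₂ = t₃ := by
    by_contra! h
    have : ({t₁, t₂, t₃} : Finset E).card ≤ T.card :=
      Finset.card_le_card (by simp [Finset.insert_subset_iff, ht₁, ht₂, ht₃])
    rw [Finset.card_eq_three.mpr ⟨t₁, t₂, t₃, h.1, h.2.1, h.2.2, rfl⟩] at this
    omega
  rw [mem_closedBall, dist_zero_right]
  rcases hcoinc with rfl | rfl | rfl
  · have : dist a (-a) = 2 * ‖a‖ := by
      rw [dist_eq_norm, sub_neg_eq_add, ← two_smul ℝ, norm_smul, Real.norm_two]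
    linarith [dist_triangle_right a (-a) t₁]
  · linarith [dist_triangle_right a 0 t₁, dist_zero_right a]
  · linarith [dist_triangle_right (-a) 0 t₂, dist_zero_right (-a), norm_neg a]

lemma logb_two_one_add_le {y : ℝ} (hy : 0 ≤ y) : Real.logb 2 (1 + y) ≤ 2 * y := by
  rw [Real.logb, div_le_iff₀ (Real.log_pos one_lt_two)]
  have := Real.log_le_sub_one_of_pos (by linarith : 0 < 1 + y)
  nlinarith [Real.log_two_gt_d9]

/-- The index `k = ⌊N (B/ε)^q⌋ + 1`. -/
lemma exists_nat_mul_rpow_lt {N : ℕ} (hN : 1 ≤ N) {q B ε : ℝ} (hq : 0 < q) (hB : 0 < B)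
    (hBε : B < ε) : ∃ k : ℕ, 1 ≤ k ∧ k ≤ N ∧ B * ((N : ℝ) / k) ^ (1 / q) < ε ∧
      (k : ℝ) ≤ N * (B / ε) ^ q + 1 := by
  have hε : 0 < ε := hB.trans hBε
  set y := (N : ℝ) * (B / ε) ^ q
  have hy : 0 ≤ y := by positivity
  have hyN : y < N := mul_lt_of_lt_one_right (by exact_mod_cast hN)
    (Real.rpow_lt_one (by positivity) ((div_lt_one hε).mpr hBε) hq)
  refine ⟨⌊y⌋₊ + 1, le_add_self, Nat.floor_lt hy |>.mpr hyN, ?_, by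
    push_cast; linarith [Nat.floor_le hy]⟩
  have hk : y < (⌊y⌋₊ + 1 : ℕ) := by exact_mod_cast Nat.lt_floor_add_one y
  rw [← lt_div_iff₀' hB, one_div, Real.rpow_inv_lt_iff_of_pos (by positivity) (by positivity) hq,
    div_lt_iff₀ (by linarith), ← inv_div, Real.inv_rpow (by positivity), inv_mul_eq_div,
    lt_div_iff₀ (by positivity)]
  exact hk

lemma mul_rpow_one_div_lt_half {N q B ε : ℝ} (hN : 0 ≤ N) (hq : 0 < q) (hB : 0 < B) (hε : 0 < ε)
    (h : 2 ^ q * (N * (B / ε) ^ q) < 1) : B * N ^ (1 / q) < ε / 2 := by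
  rw [← lt_div_iff₀' hB, one_div, Real.rpow_inv_lt_iff_of_pos hN (by positivity) hq,
    show ε / 2 / B = (2 * (B / ε))⁻¹ by field_simp, Real.inv_rpow (by positivity),
    Real.mul_rpow zero_le_two (by positivity), ← one_div, lt_div_iff₀ (by positivity)]
  linarith

section EntropyBound

open Module

variable {E : Type*} [NormedAddCommGroup E] [NormedSpace ℝ E] (W : Submodule ℝ E)
  [FiniteDimensional ℝ W] {A : Set E}

lemma metricEntropy_le_of_cover_card_le_two_pow_finrank (hAW : A ⊆ W) (T₀ : Finset E)
    (hT₀A : ↑T₀ ⊆ A) (hT₀card : T₀.card ≤ 2 ^ finrank ℝ W) {B ε : ℝ} (hε : 0 < ε) (hεB : ε ≤ B)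
    (hT₀ : ∀ a ∈ A, ∃ t ∈ T₀, dist a t ≤ 2 * B) :
    metricEntropy dist ε A ≤ 17 * finrank ℝ W * (B / ε) := by
  have hx : 1 ≤ B / ε := (one_le_div hε).mpr hεB
  have hcov := coveringNum_two_mul_le_of_cover_submodule W hAW T₀ (hT₀A.trans hAW)
    (by linarith) (half_pos hε) hT₀
  rw [mul_div_cancel₀ ε two_ne_zero, show 2 * (2 * B) / (ε / 2) = 8 * (B / ε) by ring] at hcov
  have h := metricEntropy_le_logb (one_le_pow₀ (by linarith : (1 : ℝ) ≤ 2 * (1 + 8 * (B / ε))))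
    (hcov.trans (by rw [mul_pow]; gcongr; exact_mod_cast hT₀card))
  rw [Real.logb_pow, Real.logb_mul two_ne_zero (by positivity),
    Real.logb_self_eq_one one_lt_two] at h
  calc metricEntropy dist ε A ≤ finrank ℝ W * (1 + Real.logb 2 (1 + 8 * (B / ε))) := h
    _ ≤ finrank ℝ W * (17 * (B / ε)) := by
        gcongr
        linarith [logb_two_one_add_le (by positivity : 0 ≤ 8 * (B / ε))]
    _ = 17 * finrank ℝ W * (B / ε) := by ring

theorem metricEntropy_le_of_entropyNum_le (hAW : A ⊆ W) (hA0 : 0 ∈ A)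
    (hAneg : ∀ a ∈ A, -a ∈ A) (hA : IsBounded A) {q B ε : ℝ} (hq : 1 ≤ q) (hB : 0 < B)
    (hε : 0 < ε) (hent : ∀ k : ℕ, 1 ≤ k → k ≤ finrank ℝ W →
      entropyNum dist k A ≤ B * ((finrank ℝ W : ℝ) / k) ^ (1 / q)) :
    metricEntropy dist ε A ≤ (2 ^ q + 17) * finrank ℝ W * (B / ε) ^ q := by
  set N := finrank ℝ W
  set x := B / ε
  have hq0 : 0 < q := by linarith
  have hcover : ∀ k : ℕ, 1 ≤ k → k ≤ N → ∀ ρ, B * ((N : ℝ) / k) ^ (1 / q) < ρ →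
      ∃ T : Finset E, ↑T ⊆ A ∧ T.card ≤ 2 ^ k ∧ ∀ a ∈ A, ∃ t ∈ T, dist a t ≤ ρ :=
    fun k hk hkN ρ hρ => exists_cover_card_le_two_pow_of_entropyNum_lt ⟨0, hA0⟩
      (totallyBounded_of_subset_submodule W hAW hA) ((hent k hk hkN).trans_lt hρ)
  have h2q : (0 : ℝ) ≤ 2 ^ q := by positivity
  have hNx : 0 ≤ N * x ^ q := by positivity
  rcases Nat.eq_zero_or_pos N with hN0 | hN1
  · have hW : W = ⊥ := Submodule.finrank_eq_zero.mp hN0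
    refine (metricEntropy_nonpos_of_subset_closedBall hA0 fun a ha => ?_).trans (by simp [hN0])
    have : a = 0 := by simpa [hW] using hAW ha
    simp [this, hε.le]
  rcases le_or_gt ε B with hεB | hBε
  · obtain ⟨T₀, hT₀A, hT₀card, hT₀⟩ := hcover N hN1 le_rfl (2 * B) (by
      rw [div_self (by positivity), Real.one_rpow]; linarith)
    have hxq : x ≤ x ^ q := Real.self_le_rpow_of_one_le ((one_le_div hε).mpr hεB) hq
    calc metricEntropy dist ε A ≤ 17 * N * x :=
          metricEntropy_le_of_cover_card_le_two_pow_finrank W hAW T₀ hT₀A hT₀card hε hεB hT₀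
      _ ≤ (2 ^ q + 17) * N * x ^ q := by gcongr; linarith
  rcases le_or_gt 1 (2 ^ q * (N * x ^ q)) with hmid | hlarge
  · obtain ⟨k, hk1, hkN, hkε, hkx⟩ := exists_nat_mul_rpow_lt hN1 hq0 hB hBε
    obtain ⟨T, hTA, hTcard, hT⟩ := hcover k hk1 hkN ε hkε
    calc metricEntropy dist ε A ≤ k := metricEntropy_le_of_card_le_two_pow T hTA hT hTcard
      _ ≤ (2 ^ q + 17) * N * x ^ q := by linarith
  · obtain ⟨T, hTA, hTcard, hT⟩ := hcover 1 le_rfl hN1 (ε / 2) (by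
      simpa using mul_rpow_one_div_lt_half N.cast_nonneg hq0 hB hε hlarge)
    have hAε := subset_closedBall_of_cover_card_le_two hA0 hAneg T hTcard hT
    rw [mul_div_cancel₀ ε two_ne_zero] at hAε
    exact (metricEntropy_nonpos_of_subset_closedBall hA0 hAε).trans (by positivity)

end EntropyBound

section LqNorm

open MeasureTheory

variable {Ω : Type*} [MeasurableSpace Ω] (μ : Measure Ω) {q : ℝ}

lemma LqNorm_nonneg (f : Ω → ℝ) : 0 ≤ LqNorm μ q f :=
  Real.rpow_nonneg (integral_nonneg fun _ => by positivity) _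

lemma LqNorm_smul (hq : 0 < q) (c : ℝ) (f : Ω → ℝ) :
    LqNorm μ q (c • f) = |c| * LqNorm μ q f := by
  have h : ∀ x, ‖(c • f) x‖ ^ q = |c| ^ q * ‖f x‖ ^ q := fun x => by
    rw [Pi.smul_apply, smul_eq_mul, norm_mul, Real.norm_eq_abs,
      Real.mul_rpow (abs_nonneg c) (norm_nonneg _)]
  simp only [LqNorm, h, integral_const_mul]
  rw [Real.mul_rpow (by positivity) (integral_nonneg fun x => by positivity),
    ← Real.rpow_mul (abs_nonneg c), mul_one_div_cancel hq.ne', Real.rpow_one]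

lemma LqNorm_neg (f : Ω → ℝ) : LqNorm μ q (-f) = LqNorm μ q f := by
  simp [LqNorm]

lemma LqNorm_zero (hq : 0 < q) : LqNorm μ q (0 : Ω → ℝ) = 0 := by
  simpa using LqNorm_smul μ hq 0 0

end LqNorm

section ContinuousFunctions

open MeasureTheory Module

variable {X : Type*} [TopologicalSpace X] [CompactSpace X]

lemma supDist_coe (F G : C(X, ℝ)) : supDist ⇑F ⇑G = dist F G := by
  simp [supDist, ContinuousMap.dist_eq_iSup, Real.dist_eq]

variable [MeasurableSpace X] (μ : Measure X) {q : ℝ}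

lemma exists_norm_le_mul_LqNorm_of_isBounded (W : Submodule ℝ C(X, ℝ)) (hq : 0 < q)
    (hW : IsBounded {F : C(X, ℝ) | F ∈ W ∧ LqNorm μ q F ≤ 1}) :
    ∃ R, 0 ≤ R ∧ ∀ F ∈ W, ‖F‖ ≤ R * LqNorm μ q F := by
  obtain ⟨R, hR⟩ := hW.subset_closedBall 0
  have hR0 : 0 ≤ R := by
    simpa using hR ⟨W.zero_mem, by simp [LqNorm_zero μ hq]⟩
  refine ⟨R + 1, by positivity, fun F hF => le_of_forall_pos_le_add fun δ hδ => ?_⟩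
  set L := LqNorm μ q F
  have hc : 0 < L + δ / (R + 1) := by have := LqNorm_nonneg μ (q := q) F; positivity
  have hmem := hR ⟨W.smul_mem (L + δ / (R + 1))⁻¹ hF, by
    rw [ContinuousMap.coe_smul, LqNorm_smul μ hq, abs_of_pos (inv_pos.mpr hc), inv_mul_le_iff₀ hc]
    linarith [div_pos hδ (by positivity : 0 < R + 1)]⟩
  rw [mem_closedBall_zero_iff, norm_smul, Real.norm_of_nonneg (inv_pos.mpr hc).le,
    inv_mul_le_iff₀ hc] at hmem
  calc ‖F‖ ≤ (L + δ / (R + 1)) * R := hmem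
    _ ≤ (L + δ / (R + 1)) * (R + 1) := by gcongr; linarith
    _ = (R + 1) * L + δ := by field_simp

variable [BorelSpace X] [IsProbabilityMeasure μ]

lemma Continuous.integrable_of_compactSpace {f : X → ℝ} (hf : Continuous f) : Integrable f μ :=
  hf.integrable_of_hasCompactSupport (HasCompactSupport.of_compactSpace f)

lemma integral_sq_eq_norm_toLp_sq (F : C(X, ℝ)) :
    ∫ x, F x ^ 2 ∂μ = ‖ContinuousMap.toLp 2 μ ℝ F‖ ^ 2 := by
  rw [← real_inner_self_eq_norm_sq, ContinuousMap.inner_toLp]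
  simp [sq]

/-- From the nonnegativity of the variance of `‖F‖`. -/
lemma integral_norm_le_norm_toLp (F : C(X, ℝ)) :
    ∫ x, ‖F x‖ ∂μ ≤ ‖ContinuousMap.toLp 2 μ ℝ F‖ := by
  have hvar := ProbabilityTheory.variance_nonneg (fun x => ‖F x‖) μ
  rw [ProbabilityTheory.variance_eq_sub ((ContinuousMap.memLp (p := 2) μ ℝ F).norm)] at hvar
  refine le_of_pow_le_pow_left₀ two_ne_zero (norm_nonneg _) ?_
  rw [← integral_sq_eq_norm_toLp_sq]
  simpa using hvar

lemma norm_le_rpow_mul_integral_norm {R : ℝ} (hq : 1 ≤ q) (hR : 0 ≤ R) {F : C(X, ℝ)}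
    (hF : ‖F‖ ≤ R * LqNorm μ q F) : ‖F‖ ≤ R ^ q * ∫ x, ‖F x‖ ∂μ := by
  have hq0 : 0 < q := by linarith
  rcases (norm_nonneg F).eq_or_lt with hF0 | hFpos
  · rw [← hF0]; positivity
  have hpt : ∀ x, ‖F x‖ ^ q ≤ ‖F‖ ^ (q - 1) * ‖F x‖ := fun x => by
    calc ‖F x‖ ^ q = ‖F x‖ ^ (q - 1) * ‖F x‖ ^ (1 : ℝ) := by
          rw [← Real.rpow_add' (norm_nonneg _) (by linarith), sub_add_cancel]
      _ ≤ ‖F‖ ^ (q - 1) * ‖F x‖ := by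
          rw [Real.rpow_one]
          exact mul_le_mul_of_nonneg_right
            (Real.rpow_le_rpow (norm_nonneg _) (F.norm_coe_le_norm x) (by linarith)) (norm_nonneg _)
  have hLq : ‖F‖ ^ q ≤ R ^ q * ∫ x, ‖F x‖ ^ q ∂μ := by
    calc ‖F‖ ^ q ≤ (R * LqNorm μ q F) ^ q := by gcongr
      _ = R ^ q * ∫ x, ‖F x‖ ^ q ∂μ := by
          rw [LqNorm, Real.mul_rpow hR (by positivity), ← Real.rpow_mul
            (integral_nonneg fun x => by positivity), one_div_mul_cancel hq0.ne', Real.rpow_one]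
  have hL1 : ∫ x, ‖F x‖ ^ q ∂μ ≤ ‖F‖ ^ (q - 1) * ∫ x, ‖F x‖ ∂μ := by
    rw [← integral_const_mul]
    exact integral_mono
      ((F.continuous.norm.rpow_const fun _ => Or.inr hq0.le).integrable_of_compactSpace μ)
      ((F.continuous.norm.integrable_of_compactSpace μ).const_mul _) hpt
  have hsplit : ‖F‖ ^ q = ‖F‖ ^ (q - 1) * ‖F‖ := by
    rw [← Real.rpow_add_one hFpos.ne', sub_add_cancel]
  have hpos : 0 < ‖F‖ ^ (q - 1) := Real.rpow_pos_of_pos hFpos _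
  nlinarith [mul_le_mul_of_nonneg_left hL1 (by positivity : (0 : ℝ) ≤ R ^ q)]

/-- Pull an `L_2`-orthonormal basis `u` of `U` back to functions: pointwise, `∑ uᵢ(x)²` is the
squared norm of evaluation at `x`, at most `C²`, while its integral is `dim U`. -/
lemma finrank_le_sq_of_norm_le_mul_norm_toLp (U : Submodule ℝ C(X, ℝ)) [FiniteDimensional ℝ U]
    {C : ℝ} (hC : 0 ≤ C) (hU : ∀ F ∈ U, ‖F‖ ≤ C * ‖ContinuousMap.toLp 2 μ ℝ F‖) :
    (finrank ℝ U : ℝ) ≤ C ^ 2 := by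
  let T : U →ₗ[ℝ] Lp ℝ 2 μ := (ContinuousMap.toLp 2 μ ℝ).toLinearMap ∘ₗ U.subtype
  have hT : Function.Injective T := by
    refine (injective_iff_map_eq_zero T).mpr fun F hF => ?_
    have := hU F F.2
    simp only [T, LinearMap.comp_apply] at hF
    rw [show ContinuousMap.toLp 2 μ ℝ (F : C(X, ℝ)) = 0 from hF, norm_zero, mul_zero] at this
    exact Subtype.ext (norm_le_zero_iff.mp this)
  let e := LinearEquiv.ofInjective T hT
  have : FiniteDimensional ℝ (LinearMap.range T) := Module.Finite.equiv e
  let b := stdOrthonormalBasis ℝ (LinearMap.range T)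
  let u : Fin (finrank ℝ (LinearMap.range T)) → C(X, ℝ) := fun i => e.symm (b i)
  have hTu : ∀ h, ContinuousMap.toLp 2 μ ℝ (e.symm h : C(X, ℝ)) = h := fun h => by
    have := congrArg Subtype.val (e.apply_symm_apply h)
    rwa [LinearEquiv.ofInjective_apply] at this
  have hpt : ∀ x, ∑ i, u i x ^ 2 ≤ C ^ 2 := fun x => by
    let L : StrongDual ℝ (LinearMap.range T) :=
      ((ContinuousMap.evalCLM ℝ x).toLinearMap ∘ₗ U.subtype ∘ₗ e.symm.toLinearMap).mkContinuous C
        fun h => by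
          simpa [hTu] using ((e.symm h : C(X, ℝ)).norm_coe_le_norm x).trans (hU _ (e.symm h).2)
    rw [← show ∑ i, L (b i) ^ 2 = ∑ i, u i x ^ 2 from rfl, ← b.norm_dual L]
    exact pow_le_pow_left₀ (by positivity) (LinearMap.mkContinuous_norm_le _ hC _) 2
  have hint : ∀ i, Integrable (fun x => u i x ^ 2) μ := fun i =>
    ((u i).continuous.pow 2).integrable_of_compactSpace μ
  have hb : ∀ i, ‖(b i : Lp ℝ 2 μ)‖ = 1 := b.orthonormal.1
  calc (finrank ℝ U : ℝ) = ∫ x, ∑ i, u i x ^ 2 ∂μ := by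
        rw [integral_finsetSum _ fun i _ => hint i]
        simp [u, integral_sq_eq_norm_toLp_sq, hTu, hb, e.finrank_eq]
    _ ≤ ∫ _, C ^ 2 ∂μ := integral_mono (integrable_finsetSum _ fun i _ => hint i)
        (integrable_const _) hpt
    _ = C ^ 2 := by simp

lemma finiteDimensional_of_norm_le_mul_norm_toLp (W : Submodule ℝ C(X, ℝ)) {C : ℝ} (hC : 0 ≤ C)
    (hW : ∀ F ∈ W, ‖F‖ ≤ C * ‖ContinuousMap.toLp 2 μ ℝ F‖) : FiniteDimensional ℝ W := by
  refine Module.rank_lt_aleph0_iff.mp ((rank_le (n := ⌊C ^ 2⌋₊) fun s hs => ?_).trans_lt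
    (Cardinal.natCast_lt_aleph0))
  let v : s → C(X, ℝ) := fun i => (i : W)
  have hv : LinearIndependent ℝ v := hs.map' W.subtype W.ker_subtype
  have hspan : Submodule.span ℝ (Set.range v) ≤ W :=
    Submodule.span_le.mpr (Set.range_subset_iff.mpr fun i => (i : W).2)
  have : FiniteDimensional ℝ (Submodule.span ℝ (Set.range v)) :=
    FiniteDimensional.span_of_finite ℝ (Set.finite_range v)
  have := finrank_le_sq_of_norm_le_mul_norm_toLp μ _ hC fun F hF => hW F (hspan hF)
  rw [finrank_span_eq_card hv, Fintype.card_coe] at this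
  exact Nat.le_floor this

theorem finiteDimensional_of_isBounded (W : Submodule ℝ C(X, ℝ)) (hq : 1 ≤ q)
    (hW : IsBounded {F : C(X, ℝ) | F ∈ W ∧ LqNorm μ q F ≤ 1}) : FiniteDimensional ℝ W := by
  obtain ⟨R, hR, hRW⟩ := exists_norm_le_mul_LqNorm_of_isBounded μ W (by linarith) hW
  refine finiteDimensional_of_norm_le_mul_norm_toLp μ W (by positivity : 0 ≤ R ^ q)
    fun F hF => (norm_le_rpow_mul_integral_norm μ hq hR (hRW F hF)).trans ?_
  gcongr
  exact integral_norm_le_norm_toLp μ F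

end ContinuousFunctions

/-- inequality (2.5): for `1 ≤ q < ∞` and `ε' > 0` there is a constant
`C(ε', q) > 0` such that for every `N`-dimensional subspace `X_N` of continuous functions
satisfying `ε_k(X_N^q, L_∞) ≤ B (N/k)^{1/q}` for `1 ≤ k ≤ N` (with `B ≥ 1`), one has
`H_ε(X_N^q, L_∞) ≤ C(ε', q) N (B/ε)^q` for every `ε ≥ ε'`. -/
theorem statement7 (q : ℝ) (hq : 1 ≤ q) (ε' : ℝ) (hε' : 0 < ε') :
    ∃ C : ℝ, 0 < C ∧
      ∀ (d N : ℕ) (Ω : Set (Fin d → ℝ)), IsCompact Ω →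
        ∀ (μ : Measure Ω), IsProbabilityMeasure μ →
          ∀ V : Submodule ℝ (Ω → ℝ), Module.finrank ℝ V = N →
            (∀ f ∈ V, Continuous f) →
            ∀ B : ℝ, 1 ≤ B →
              (∀ k : ℕ, 1 ≤ k → k ≤ N →
                entropyNum supDist k (unitBallLq μ q V) ≤ B * ((N : ℝ) / k) ^ (1 / q)) →
              ∀ ε : ℝ, ε' ≤ ε →
                metricEntropy supDist ε (unitBallLq μ q V) ≤ C * N * (B / ε) ^ q := by
  refine ⟨2 ^ q + 17, by positivity, fun d N Ω hΩ μ _ V hN hV B hB hent ε hε => ?_⟩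
  have : CompactSpace Ω := isCompact_iff_compactSpace.mp hΩ
  have hε0 : 0 < ε := hε'.trans_le hε
  let W : Submodule ℝ C(Ω, ℝ) := V.comap (ContinuousMap.coeFnLinearMap ℝ)
  let A : Set C(Ω, ℝ) := {F | F ∈ W ∧ LqNorm μ q F ≤ 1}
  have hVA : unitBallLq μ q V = (⇑) '' A := by
    ext f
    exact ⟨fun hf => ⟨⟨f, hV f hf.1⟩, hf, rfl⟩, by rintro ⟨F, hF, rfl⟩; exact hF⟩
  simp only [hVA, metricEntropy_image DFunLike.coe_injective supDist_coe,
    entropyNum_image DFunLike.coe_injective supDist_coe] at hent ⊢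
  by_cases h0 : coveringNum dist ε A = 0
  · rw [metricEntropy, h0, Nat.cast_zero, Real.logb_zero]
    have : 0 < B := by linarith
    positivity
  have hAb := isBounded_of_coveringNum_ne_zero h0
  have : FiniteDimensional ℝ W := finiteDimensional_of_isBounded μ W hq hAb
  obtain rfl : Module.finrank ℝ W = N := hN ▸ Submodule.finrank_comap_eq_of_le_range
    DFunLike.coe_injective fun f hf => ⟨⟨f, hV f hf⟩, rfl⟩
  exact metricEntropy_le_of_entropyNum_le W (A := A) (fun F hF => hF.1)
    ⟨W.zero_mem, by simp [LqNorm_zero μ (by linarith : 0 < q)]⟩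
    (fun F hF => ⟨W.neg_mem hF.1, by simpa [LqNorm_neg] using hF.2⟩) hAb hq (by linarith) hε0 hent
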